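/- Let n ≥ 3 and let A be an n×n 0-1 matrix of block form [[0_r, X, Z],[0, P, Y],[0, 0, 0_s]] with P a permutation matrix and r, s ≥ 0. If A² is also a 0-1 matrix, then f(A) ≤ γ(n). -/

import Mathlib

open Matrix

/-- A 0-1 matrix over the integers. -/
def IsZeroOne {α β : Type*} (A : Matrix α β ℤ) : Prop :=
  ∀ i j, A i j = 0 ∨ A i j = 1

/-- A permutation matrix. -/
def IsPermMatrix {α : Type*} [DecidableEq α] (P : Matrix α α ℤ) : Prop :=
  ∃ σ : Equiv.Perm α, ∀ i j, P i j = if j = σ i then 1 else 0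

/-- The number of nonzero entries of a matrix. -/
def fcount {α β : Type*} [Fintype α] [Fintype β] (A : Matrix α β ℤ) : ℕ :=
  (Finset.univ.filter fun p : α × β => A p.1 p.2 ≠ 0).card

/-- γ(n) = (n+1)²/4 if n is odd and (n²+2n)/4 if n is even. -/
def gamma (n : ℕ) : ℕ := if Odd n then (n + 1) ^ 2 / 4 else (n ^ 2 + 2 * n) / 4

/-- The block matrix [[0, X, Z],[0, P, Y],[0, 0, 0]] with square zero diagonal blocks. -/
def blockH {α β γ : Type*} (X : Matrix α β ℤ) (P : Matrix β β ℤ)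
    (Y : Matrix β γ ℤ) (Z : Matrix α γ ℤ) : Matrix (α ⊕ β ⊕ γ) (α ⊕ β ⊕ γ) ℤ :=
  Matrix.fromBlocks 0 (Matrix.fromCols X Z) 0 (Matrix.fromBlocks P Y 0 0)

/-! The entries of the block `X * Y` of `A²` count the paths `i → j → k` through the middle
block, so `A²` being 0-1 gives `∑ⱼ aⱼ bⱼ ≤ r s`, where `aⱼ` counts the ones in column `j` of `X`
and `bⱼ` those in row `j` of `Y`. For `s ≤ r` the bounds `aⱼ ≤ r`, `bⱼ ≤ s` give
`(r - aⱼ)(r - bⱼ) ≥ 0`, i.e. `r (aⱼ + bⱼ) ≤ r² + aⱼ bⱼ`; summing, `∑ⱼ (aⱼ + bⱼ) ≤ m r + s`.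
Together with `f(Z) ≤ r s` and `f(P) = m` this yields `f(A) ≤ (r + 1)(m + s) ≤ (n + 1)² / 4`. -/

open Finset

lemma gamma_eq_succ_sq_div_four (n : ℕ) : gamma n = (n + 1) ^ 2 / 4 := by
  unfold gamma
  split_ifs with hn
  · rfl
  · obtain ⟨k, rfl⟩ := Nat.not_odd_iff_even.mp hn
    ring_nf
    omega

section Counting

variable {ι : Type*} [Fintype ι] {r s : ℕ} {a b : ι → ℕ}

lemma sum_add_le_card_mul_add_of_sum_mul_le (hsr : s ≤ r) (ha : ∀ j, a j ≤ r)
    (hb : ∀ j, b j ≤ s) (hab : ∑ j, a j * b j ≤ r * s) :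
    ∑ j, (a j + b j) ≤ Fintype.card ι * r + s := by
  rcases Nat.eq_zero_or_pos r with rfl | hr
  · have hzero : ∀ j, a j + b j = 0 := fun j => by have := ha j; have := hb j; omega
    simp [hzero]
  refine Nat.le_of_mul_le_mul_left ?_ hr
  calc r * ∑ j, (a j + b j) = ∑ j, (r * a j + r * b j) := by
        simp only [mul_sum, mul_add]
    _ ≤ ∑ j, (r * r + a j * b j) := sum_le_sum fun j _ => by
        have := ha j; have := (hb j).trans hsr
        nlinarith
    _ = Fintype.card ι * (r * r) + ∑ j, a j * b j := by
        simp [sum_add_distrib, card_univ]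
    _ ≤ Fintype.card ι * (r * r) + r * s := by gcongr
    _ = r * (Fintype.card ι * r + s) := by ring

lemma sum_add_add_mul_add_card_le (ha : ∀ j, a j ≤ r) (hb : ∀ j, b j ≤ s)
    (hab : ∑ j, a j * b j ≤ r * s) :
    ∑ j, (a j + b j) + r * s + Fintype.card ι ≤ (r + Fintype.card ι + s + 1) ^ 2 / 4 := by
  wlog hsr : s ≤ r generalizing r s a b
  · have := this hb ha (by simpa only [mul_comm] using hab) (by omega)
    rw [mul_comm s, show s + Fintype.card ι + r = r + Fintype.card ι + s by omega] at this
    simpa only [add_comm (b _)] using this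
  have hsum := sum_add_le_card_mul_add_of_sum_mul_le hsr ha hb hab
  rw [Nat.le_div_iff_mul_le (by norm_num)]
  -- the sum is at most `(r + 1) * (card ι + s)`, then AM-GM
  zify at hsum ⊢
  nlinarith [sq_nonneg ((r : ℤ) + 1 - (Fintype.card ι + s))]

end Counting

section Matrices

variable {α β γ : Type*} [Fintype α] [Fintype β] [Fintype γ]

def colCount (X : Matrix α β ℤ) (j : β) : ℕ := #{i | X i j ≠ 0}

def rowCount (Y : Matrix β γ ℤ) (j : β) : ℕ := #{k | Y j k ≠ 0}

lemma fcount_eq_sum_sum (A : Matrix α β ℤ) :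
    fcount A = ∑ i, ∑ j, if A i j ≠ 0 then 1 else 0 := by
  rw [fcount, card_filter, Fintype.sum_prod_type]

lemma fcount_eq_sum_colCount (X : Matrix α β ℤ) : fcount X = ∑ j, colCount X j := by
  simp only [fcount_eq_sum_sum, colCount, card_filter]
  exact sum_comm

lemma fcount_eq_sum_rowCount (Y : Matrix β γ ℤ) : fcount Y = ∑ j, rowCount Y j := by
  simp only [fcount_eq_sum_sum, rowCount, card_filter]

lemma fcount_le_card_mul_card (A : Matrix α β ℤ) :
    fcount A ≤ Fintype.card α * Fintype.card β :=
  (card_filter_le _ _).trans_eq (by simp)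

lemma fcount_of_isPermMatrix [DecidableEq α] {P : Matrix α α ℤ} (hP : IsPermMatrix P) :
    fcount P = Fintype.card α := by
  obtain ⟨σ, hσ⟩ := hP
  simp [fcount_eq_sum_sum, hσ]

lemma fcount_blockH (X : Matrix α β ℤ) (P : Matrix β β ℤ) (Y : Matrix β γ ℤ)
    (Z : Matrix α γ ℤ) :
    fcount (blockH X P Y Z) = fcount X + fcount Z + fcount P + fcount Y := by
  simp only [fcount_eq_sum_sum, blockH, Fintype.sum_sum_type, fromBlocks_apply₁₁,
    fromBlocks_apply₁₂, fromBlocks_apply₂₁, fromBlocks_apply₂₂, fromCols_apply_inl,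
    fromCols_apply_inr, Matrix.zero_apply, Ne, not_true_eq_false, if_false, sum_const_zero,
    zero_add, add_zero, sum_add_distrib]
  ac_rfl

lemma blockH_mul_self_apply_inl_inr_inr (X : Matrix α β ℤ) (P : Matrix β β ℤ)
    (Y : Matrix β γ ℤ) (Z : Matrix α γ ℤ) (i : α) (k : γ) :
    (blockH X P Y Z * blockH X P Y Z) (.inl i) (.inr (.inr k)) = (X * Y) i k := by
  simp [blockH, mul_apply, Fintype.sum_sum_type]

lemma natCast_card_filter_ne_zero {v : α → ℤ} (hv : ∀ i, v i = 0 ∨ v i = 1) :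
    (#{i | v i ≠ 0} : ℤ) = ∑ i, v i := by
  rw [card_filter, Nat.cast_sum]
  refine sum_congr rfl fun i _ => ?_
  rcases hv i with h | h <;> simp [h]

lemma sum_colCount_mul_rowCount_le {X : Matrix α β ℤ} {Y : Matrix β γ ℤ}
    (hX : IsZeroOne X) (hY : IsZeroOne Y) (hXY : IsZeroOne (X * Y)) :
    ∑ j, colCount X j * rowCount Y j ≤ Fintype.card α * Fintype.card γ := by
  zify
  calc ∑ j, (colCount X j : ℤ) * rowCount Y j = ∑ j, (∑ i, X i j) * ∑ k, Y j k := by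
        simp only [colCount, rowCount, natCast_card_filter_ne_zero (hX · _),
          natCast_card_filter_ne_zero (hY _ ·)]
    _ = ∑ i, ∑ k, (X * Y) i k := by
        simp only [sum_mul_sum, mul_apply]
        rw [sum_comm]
        exact sum_congr rfl fun i _ => sum_comm
    _ ≤ ∑ _i : α, ∑ _k : γ, (1 : ℤ) := by
        gcongr with i _ k
        rcases hXY i k with h | h <;> omega
    _ = Fintype.card α * Fintype.card γ := by simp

end Matrices

theorem stmt12_general {n r m s : ℕ} (hrms : r + m + s = n)
    (P : Matrix (Fin m) (Fin m) ℤ) (hP : IsPermMatrix P)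
    (X : Matrix (Fin r) (Fin m) ℤ) (Y : Matrix (Fin m) (Fin s) ℤ)
    (Z : Matrix (Fin r) (Fin s) ℤ)
    (hX : IsZeroOne X) (hY : IsZeroOne Y)
    (hsq : IsZeroOne ((blockH X P Y Z) * (blockH X P Y Z))) :
    fcount (blockH X P Y Z) ≤ gamma n := by
  have hXY : IsZeroOne (X * Y) := fun i k => by
    simpa only [blockH_mul_self_apply_inl_inr_inr] using hsq (.inl i) (.inr (.inr k))
  have hcol (j : Fin m) : colCount X j ≤ r := (card_filter_le _ _).trans_eq (card_fin r)
  have hrow (j : Fin m) : rowCount Y j ≤ s := (card_filter_le _ _).trans_eq (card_fin s)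
  have hpaths := sum_colCount_mul_rowCount_le hX hY hXY
  have hZ := fcount_le_card_mul_card Z
  simp only [Fintype.card_fin] at hpaths hZ
  have hbound := sum_add_add_mul_add_card_le hcol hrow hpaths
  rw [Fintype.card_fin, sum_add_distrib, ← fcount_eq_sum_colCount,
    ← fcount_eq_sum_rowCount] at hbound
  rw [fcount_blockH, fcount_of_isPermMatrix hP, Fintype.card_fin, gamma_eq_succ_sq_div_four,
    ← hrms]
  omega

theorem stmt12 {n r m s : ℕ} (hn : 3 ≤ n) (hrms : r + m + s = n)
    (P : Matrix (Fin m) (Fin m) ℤ) (hP : IsPermMatrix P)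
    (X : Matrix (Fin r) (Fin m) ℤ) (Y : Matrix (Fin m) (Fin s) ℤ)
    (Z : Matrix (Fin r) (Fin s) ℤ)
    (hX : IsZeroOne X) (hY : IsZeroOne Y) (hZ : IsZeroOne Z)
    (hsq : IsZeroOne ((blockH X P Y Z) * (blockH X P Y Z))) :
    fcount (blockH X P Y Z) ≤ gamma n :=
  stmt12_general hrms P hP X Y Z hX hY hsq
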